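/- Let (A, *, α, P) be a Rota-Baxter Hom-Novikov superalgebra of weight λ with P an even linear map commuting with α. Then A equipped with the product x ∘ y = P(x)*y + x*P(y) + λ x*y and the same twisting map α is a Hom-Novikov superalgebra. -/
import Mathlib


/-- The Rota-Baxter induced product `x ∘ y = P(x)*y + x*P(y) + λ x*y`. -/
def rbmul {𝕜 A : Type*} [Field 𝕜] [AddCommGroup A] [Module 𝕜 A]
    (mul : A →ₗ[𝕜] A →ₗ[𝕜] A) (P : A →ₗ[𝕜] A) (lam : 𝕜) (x y : A) : A :=
  mul (P x) y + mul x (P y) + lam • mul x y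

theorem stmt5
    (𝕜 A : Type*) [Field 𝕜] [AddCommGroup A] [Module 𝕜 A]
    (G : ZMod 2 → Submodule 𝕜 A) (hG : DirectSum.IsInternal G)
    (mul : A →ₗ[𝕜] A →ₗ[𝕜] A) (α : A →ₗ[𝕜] A)
    (hmul_even : ∀ i j : ZMod 2, ∀ x ∈ G i, ∀ y ∈ G j, mul x y ∈ G (i + j))
    (hα_even : ∀ i : ZMod 2, ∀ x ∈ G i, α x ∈ G i)
    (hα_mul : ∀ x y : A, α (mul x y) = mul (α x) (α y))
    (hls : ∀ i j k : ZMod 2, ∀ x ∈ G i, ∀ y ∈ G j, ∀ z ∈ G k,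
      mul (mul x y) (α z) - mul (α x) (mul y z)
        = ((-1 : 𝕜) ^ (i.val * j.val)) • (mul (mul y x) (α z) - mul (α y) (mul x z)))
    (hrn : ∀ i j k : ZMod 2, ∀ x ∈ G i, ∀ y ∈ G j, ∀ z ∈ G k,
      mul (mul x y) (α z) = ((-1 : 𝕜) ^ (j.val * k.val)) • mul (mul x z) (α y))
    (P' : A →ₗ[𝕜] A) (lam : 𝕜)
    (hP_even : ∀ i : ZMod 2, ∀ x ∈ G i, P' x ∈ G i)
    (hPα : ∀ x : A, P' (α x) = α (P' x))
    (hRB : ∀ x y : A,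
      mul (P' x) (P' y) = P' (mul (P' x) y + mul x (P' y) + lam • mul x y)) :
    (∀ i j : ZMod 2, ∀ x ∈ G i, ∀ y ∈ G j, rbmul mul P' lam x y ∈ G (i + j)) ∧
    (∀ x y : A, α (rbmul mul P' lam x y) = rbmul mul P' lam (α x) (α y)) ∧
    (∀ i j k : ZMod 2, ∀ x ∈ G i, ∀ y ∈ G j, ∀ z ∈ G k,
      rbmul mul P' lam (rbmul mul P' lam x y) (α z)
          - rbmul mul P' lam (α x) (rbmul mul P' lam y z)
        = ((-1 : 𝕜) ^ (i.val * j.val)) •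
            (rbmul mul P' lam (rbmul mul P' lam y x) (α z)
              - rbmul mul P' lam (α y) (rbmul mul P' lam x z))) ∧
    (∀ i j k : ZMod 2, ∀ x ∈ G i, ∀ y ∈ G j, ∀ z ∈ G k,
      rbmul mul P' lam (rbmul mul P' lam x y) (α z)
        = ((-1 : 𝕜) ^ (j.val * k.val)) • rbmul mul P' lam (rbmul mul P' lam x z) (α y)) := by

  have hP : ∀ x y : A, P' (rbmul mul P' lam x y) = mul (P' x) (P' y) := by
    intro x y
    rw [rbmul, hRB]
  refine ⟨?_, ?_, ?_, ?_⟩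
  · intro i j x hx y hy
    exact Submodule.add_mem _
      (Submodule.add_mem _ (hmul_even i j _ (hP_even i x hx) y hy)
        (hmul_even i j x hx _ (hP_even j y hy)))
      (Submodule.smul_mem _ _ (hmul_even i j x hx y hy))
  · intro x y
    simp [rbmul, hα_mul, hPα]
  · intro i j k x hx y hy z hz
    have h1 := hls i j k _ (hP_even i x hx) _ (hP_even j y hy) z hz
    have h2 := hls i j k _ (hP_even i x hx) y hy _ (hP_even k z hz)
    have h3 := hls i j k x hx _ (hP_even j y hy) _ (hP_even k z hz)
    have h4 := hls i j k x hx y hy _ (hP_even k z hz)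
    have h5 := hls i j k _ (hP_even i x hx) y hy z hz
    have h6 := hls i j k x hx _ (hP_even j y hy) z hz
    have h7 := hls i j k x hx y hy z hz
    simp only [rbmul]
    rw [← hRB x y, ← hRB y z, ← hRB y x, ← hRB x z]
    simp only [hPα, map_add, map_smul, LinearMap.add_apply, LinearMap.smul_apply]
    linear_combination (norm := module) h1 + h2 + h3 + lam • h4 + lam • h5 + lam • h6
      + (lam * lam) • h7
  · intro i j k x hx y hy z hz
    have h1 := hrn i j k _ (hP_even i x hx) _ (hP_even j y hy) z hz
    have h2 := hrn i j k _ (hP_even i x hx) y hy _ (hP_even k z hz)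
    have h3 := hrn i j k x hx _ (hP_even j y hy) _ (hP_even k z hz)
    have h4 := hrn i j k x hx y hy _ (hP_even k z hz)
    have h5 := hrn i j k _ (hP_even i x hx) y hy z hz
    have h6 := hrn i j k x hx _ (hP_even j y hy) z hz
    have h7 := hrn i j k x hx y hy z hz
    simp only [rbmul]
    rw [← hRB x y, ← hRB x z]
    simp only [hPα, map_add, map_smul, LinearMap.add_apply, LinearMap.smul_apply]
    linear_combination (norm := module) h1 + h2 + h3 + lam • h4 + lam • h5 + lam • h6
      + (lam * lam) • h7
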